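/- Let q ∈ L²((0,1),ℂ), γ ∈ ℂ \ {0}, and a ∈ (0,1]. Then the spectrum of L(q,a,γ) coincides, with multiplicities, with the spectrum of L(q_a,0,γ): the characteristic functions of these two problems have the same order of vanishing at every point of ℂ. -/

import Mathlib

open MeasureTheory Complex Set Filter

/-- `sin(ρ s)/ρ`, interpreted as `s` when `ρ = 0`. -/
noncomputable def sdiv (ρ s : ℂ) : ℂ := if ρ = 0 then s else Complex.sin (ρ * s) / ρ

/-- The solution `C(x, ρ²)` of the frozen-argument equation with `C(a) = 1`, `C'(a) = 0`. -/
noncomputable def Cfun (q : ℝ → ℂ) (a : ℝ) (ρ : ℂ) (x : ℝ) : ℂ :=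
  Complex.cos (ρ * ((x : ℂ) - (a : ℂ))) + ∫ t in a..x, sdiv ρ ((x : ℂ) - (t : ℂ)) * q t

/-- The solution `S(x, ρ²)` with `S(a) = 0`, `S'(a) = 1`. -/
noncomputable def Sfun (a : ℝ) (ρ : ℂ) (x : ℝ) : ℂ := sdiv ρ ((x : ℂ) - (a : ℂ))

/-- The derivative `C'(x, ρ²)`. -/
noncomputable def Cfun' (q : ℝ → ℂ) (a : ℝ) (ρ : ℂ) (x : ℝ) : ℂ :=
  -ρ * Complex.sin (ρ * ((x : ℂ) - (a : ℂ))) + ∫ t in a..x, Complex.cos (ρ * ((x : ℂ) - (t : ℂ))) * q t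

/-- The derivative `S'(x, ρ²)`. -/
noncomputable def Sfun' (a : ℝ) (ρ : ℂ) (x : ℝ) : ℂ := Complex.cos (ρ * ((x : ℂ) - (a : ℂ)))

/-- The characteristic function of `L(q, a, γ)`, as a function of `ρ` (where `λ = ρ²`). -/
noncomputable def charAux (q : ℝ → ℂ) (a : ℝ) (γ : ℂ) (ρ : ℂ) : ℂ :=
  (Cfun q a ρ 0 - γ * Cfun q a ρ 1) * (Sfun' a ρ 0 - γ * Sfun' a ρ 1)
    - (Sfun a ρ 0 - γ * Sfun a ρ 1) * (Cfun' q a ρ 0 - γ * Cfun' q a ρ 1)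

/-- The characteristic function `Δ(λ)` of `L(q, a, γ)`; all entries are even in `ρ`,
so any square root of `λ` may be used. -/
noncomputable def charFun (q : ℝ → ℂ) (a : ℝ) (γ : ℂ) (lam : ℂ) : ℂ :=
  charAux q a γ (lam ^ (1/2 : ℂ))

/-- `f` vanishes at `μ` to order exactly `m`. -/
def vanishesToOrder (f : ℂ → ℂ) (μ : ℂ) (m : ℕ) : Prop :=
  ∃ g : ℂ → ℂ, AnalyticAt ℂ g μ ∧ g μ ≠ 0 ∧ ∀ᶠ z in nhds μ, f z = (z - μ) ^ m * g z

/-- Two entire functions have the same zeros with the same multiplicities. -/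
def sameSpectrum (f g : ℂ → ℂ) : Prop :=
  ∀ μ : ℂ, ∀ m : ℕ, vanishesToOrder f μ m ↔ vanishesToOrder g μ m

/-- `lam` enumerates the zeros of `f` with multiplicities: for every `μ` the order of
vanishing of `f` at `μ` equals the number of indices `n` with `lam n = μ`. -/
def isSpectrum (f : ℂ → ℂ) (lam : ℕ → ℂ) : Prop :=
  ∀ μ : ℂ, vanishesToOrder f μ ({n : ℕ | lam n = μ}.ncard)

/-- The region in which the branch `α` is chosen. -/
def alphaRegion : Set ℂ :=
  {z | (0 ≤ z.re ∧ z.re ≤ 1 ∧ 0 ≤ z.im) ∨ (0 < z.re ∧ z.re < 1 ∧ z.im < 0)}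

/-- `ρ⁰_{n,α}`: equals `(2k+α)π` for `n = 2k` and `(2k−α)π` for `n = 2k−1`. -/
noncomputable def rho0 (α : ℂ) (n : ℕ) : ℂ :=
  if n % 2 = 0 then ((n : ℂ) + α) * (Real.pi : ℂ) else (((n : ℂ) + 1) - α) * (Real.pi : ℂ)

/-- The asymptotics `λ_{2k} = (2k+α)²π² + κ_{2k}`, `λ_{2k-1} = (2k-α)²π² + κ_{2k-1}`,
with `{κ_n} ∈ ℓ²`. -/
def spectralAsymptotics (α : ℂ) (lam : ℕ → ℂ) : Prop :=
  ∃ κ : ℕ → ℂ, (Summable fun n => ‖κ n‖ ^ 2) ∧ ∀ n, lam n = (rho0 α n) ^ 2 + κ n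

/-- The degenerate asymptotics: `λ_{2k} = (2k+α)²π² + κ_k` with `{κ_k} ∈ ℓ²`, while
`λ_{2k-1} = (2k-α)²π²` exactly. -/
def degenerateAsymptotics (α : ℂ) (lam : ℕ → ℂ) : Prop :=
  (∀ n, n % 2 = 1 → lam n = (rho0 α n) ^ 2) ∧
  ∃ κ : ℕ → ℂ, (Summable fun k => ‖κ k‖ ^ 2) ∧ ∀ k, lam (2 * k) = (rho0 α (2 * k)) ^ 2 + κ k

/-- The shifted potential `q_a` from Lemma 4 (for `a = 0` it is `q` itself on `(0,1)`). -/
noncomputable def qShift (q : ℝ → ℂ) (a : ℝ) (γ : ℂ) (x : ℝ) : ℂ :=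
  if x < 1 - a then q (x + a) else γ⁻¹ * q (x + a - 1)

/-!
Let `R(s)` be the fundamental matrix of `-y'' = ρ² y` (normalised at `s = 0`) and `k(s)` its
second column. By Duhamel's formula the fundamental matrix of `L(q, a, γ)` is
`M(x) = R(x - a) + (∫_a^x q(t) k(x - t) dt) e₁ᵀ`, and `Δ = det (M(0) - γ M(1))`.
Since `R(a) R(s) = R(a + s)` and `det R(a) = 1`, multiplying `M(0) - γ M(1)` on the left by
`R(a)` gives `1 - γ M_a(1)`, where `M_a` is the fundamental matrix of `L(q_a, 0, γ)`: the
substitutions `t ↦ t ∓ a` split the integral defining `M_a(1)` into a piece over `(a, 1)` and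
`γ⁻¹` times a piece over `(0, a)`. Hence the two characteristic functions coincide identically.
-/

open intervalIntegral Matrix

lemma MeasureTheory.MemLp.intervalIntegrable_of_Ioo {E : Type*} [NormedAddCommGroup E]
    {f : ℝ → E} {p : ENNReal} (hp : 1 ≤ p) {a b : ℝ} (hab : a ≤ b)
    (hf : MemLp f p (volume.restrict (Ioo a b))) :
    IntervalIntegrable f volume a b := by
  have : IsFiniteMeasure (volume.restrict (Ioo a b)) := isFiniteMeasure_restrict.2 (by simp)
  exact (intervalIntegrable_iff_integrableOn_Ioo_of_le hab).2 (hf.integrable hp)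

lemma intervalIntegral_apply {ι E : Type*} [Fintype ι] [NormedAddCommGroup E] [NormedSpace ℝ E]
    [CompleteSpace E] {f : ℝ → ι → E} {a b : ℝ} (hf : IntervalIntegrable f volume a b) (i : ι) :
    (∫ t in a..b, f t) i = ∫ t in a..b, f t i :=
  ((ContinuousLinearMap.proj (R := ℝ) i).intervalIntegral_comp_comm hf).symm

lemma Matrix.mulVec_intervalIntegral {m n 𝕜 : Type*} [Fintype m] [Fintype n] [RCLike 𝕜]
    (A : Matrix m n 𝕜) {f : ℝ → n → 𝕜} {a b : ℝ} (hf : IntervalIntegrable f volume a b) :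
    A *ᵥ ∫ t in a..b, f t = ∫ t in a..b, A *ᵥ f t :=
  ((LinearMap.toContinuousLinearMap A.mulVecLin).intervalIntegral_comp_comm hf).symm

lemma sdiv_zero (ρ : ℂ) : sdiv ρ 0 = 0 := by
  unfold _root_.sdiv; split_ifs <;> simp

lemma sdiv_add (ρ s u : ℂ) :
    sdiv ρ (s + u) = sdiv ρ s * cos (ρ * u) + cos (ρ * s) * sdiv ρ u := by
  unfold _root_.sdiv; split_ifs with h
  · simp [h]
  · rw [mul_add, sin_add]; field_simp

lemma cos_mul_add (ρ s u : ℂ) :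
    cos (ρ * (s + u)) = cos (ρ * s) * cos (ρ * u) - ρ ^ 2 * (sdiv ρ s * sdiv ρ u) := by
  unfold _root_.sdiv; split_ifs with h
  · simp [h]
  · rw [mul_add, cos_add]; field_simp

lemma mul_sin_mul (ρ s : ℂ) : ρ * sin (ρ * s) = ρ ^ 2 * sdiv ρ s := by
  unfold _root_.sdiv; split_ifs with h
  · simp [h]
  · field_simp

lemma cos_sq_add_sq_mul_sdiv_sq (ρ s : ℂ) : cos (ρ * s) ^ 2 + ρ ^ 2 * sdiv ρ s ^ 2 = 1 := by
  unfold _root_.sdiv; split_ifs with h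
  · simp [h]
  · field_simp; linear_combination sin_sq_add_cos_sq (ρ * s)

lemma continuous_sdiv (ρ : ℂ) : Continuous (sdiv ρ) := by
  unfold _root_.sdiv; split_ifs
  · exact continuous_id
  · fun_prop

noncomputable def freeFundMatrix (ρ : ℂ) (s : ℝ) : Matrix (Fin 2) (Fin 2) ℂ :=
  !![cos (ρ * s), sdiv ρ s; -(ρ ^ 2 * sdiv ρ s), cos (ρ * s)]

noncomputable def freeKernel (ρ : ℂ) (s : ℝ) : Fin 2 → ℂ := ![sdiv ρ s, cos (ρ * s)]

lemma freeFundMatrix_zero (ρ : ℂ) : freeFundMatrix ρ 0 = 1 := by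
  ext i j; fin_cases i <;> fin_cases j <;> simp [freeFundMatrix, sdiv_zero]

lemma freeFundMatrix_add (ρ : ℂ) (u v : ℝ) :
    freeFundMatrix ρ (u + v) = freeFundMatrix ρ u * freeFundMatrix ρ v := by
  ext i j
  fin_cases i <;> fin_cases j <;>
    simp only [freeFundMatrix, Matrix.mul_apply, Fin.sum_univ_two, of_apply, cons_val',
      cons_val_zero, cons_val_one, cons_val_fin_one, Fin.isValue, Fin.zero_eta, Fin.mk_one,
      ofReal_add, sdiv_add, cos_mul_add, neg_mul, mul_neg] <;>
    ring

lemma det_freeFundMatrix (ρ : ℂ) (s : ℝ) : (freeFundMatrix ρ s).det = 1 := by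
  simp only [freeFundMatrix, det_fin_two_of]
  linear_combination cos_sq_add_sq_mul_sdiv_sq ρ s

lemma freeFundMatrix_mulVec_freeKernel (ρ : ℂ) (u v : ℝ) :
    freeFundMatrix ρ u *ᵥ freeKernel ρ v = freeKernel ρ (u + v) := by
  ext i
  fin_cases i <;>
    simp only [freeFundMatrix, freeKernel, mulVec, dotProduct, Fin.sum_univ_two, of_apply,
      cons_val', cons_val_zero, cons_val_one, cons_val_fin_one, Fin.isValue, Fin.zero_eta,
      Fin.mk_one, ofReal_add, sdiv_add, cos_mul_add, neg_mul] <;>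
    ring

lemma continuous_freeKernel (ρ : ℂ) : Continuous (freeKernel ρ) :=
  continuous_pi <| Fin.forall_fin_two.2 ⟨(continuous_sdiv ρ).comp continuous_ofReal,
    continuous_cos.comp (continuous_const.mul continuous_ofReal)⟩

noncomputable def fundMatrix (q : ℝ → ℂ) (a : ℝ) (ρ : ℂ) (x : ℝ) : Matrix (Fin 2) (Fin 2) ℂ :=
  !![Cfun q a ρ x, Sfun a ρ x; Cfun' q a ρ x, Sfun' a ρ x]

lemma charAux_eq_det (q : ℝ → ℂ) (a : ℝ) (γ ρ : ℂ) :
    charAux q a γ ρ = (fundMatrix q a ρ 0 - γ • fundMatrix q a ρ 1).det := by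
  simp [charAux, fundMatrix, det_fin_two_of]

lemma intervalIntegrable_smul_freeKernel {q : ℝ → ℂ} {a b : ℝ}
    (hq : IntervalIntegrable q volume a b) (ρ : ℂ) (x : ℝ) :
    IntervalIntegrable (fun t => q t • freeKernel ρ (x - t)) volume a b :=
  hq.smul_continuousOn ((continuous_freeKernel ρ).comp (continuous_sub_left x)).continuousOn

lemma fundMatrix_duhamel {q : ℝ → ℂ} {a x : ℝ} (hq : IntervalIntegrable q volume a x) (ρ : ℂ) :
    fundMatrix q a ρ x = freeFundMatrix ρ (x - a)
      + vecMulVec (∫ t in a..x, q t • freeKernel ρ (x - t)) ![1, 0] := by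
  have hint := intervalIntegrable_smul_freeKernel hq ρ x
  ext i j
  rw [Matrix.add_apply, vecMulVec_apply, intervalIntegral_apply hint]
  fin_cases i <;> fin_cases j <;>
    simp [fundMatrix, freeFundMatrix, Cfun, Cfun', Sfun, Sfun', freeKernel, mul_comm (q _),
      ← mul_sin_mul]

lemma fundMatrix_self (q : ℝ → ℂ) (a : ℝ) (ρ : ℂ) : fundMatrix q a ρ a = 1 := by
  rw [fundMatrix_duhamel IntervalIntegrable.refl, sub_self, freeFundMatrix_zero, integral_same,
    zero_vecMulVec, add_zero]

lemma fundMatrix_zero {q : ℝ → ℂ} {a : ℝ} (hq : IntervalIntegrable q volume 0 a) (ρ : ℂ) :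
    fundMatrix q a ρ 0 = freeFundMatrix ρ (-a) - vecMulVec
      (freeFundMatrix ρ (-a) *ᵥ ∫ t in (0 : ℝ)..a, q t • freeKernel ρ (a - t)) ![1, 0] := by
  have hk (t : ℝ) : q t • freeKernel ρ (0 - t)
      = freeFundMatrix ρ (-a) *ᵥ (q t • freeKernel ρ (a - t)) := by
    rw [mulVec_smul, freeFundMatrix_mulVec_freeKernel]; congr 2; ring
  rw [fundMatrix_duhamel hq.symm, integral_symm, funext hk,
    ← mulVec_intervalIntegral _ (intervalIntegrable_smul_freeKernel hq ρ a), zero_sub,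
    neg_vecMulVec, sub_eq_add_neg]

section qShift

variable {q : ℝ → ℂ} {a : ℝ} (γ : ℂ)

lemma qShift_eqOn_Iio : EqOn (qShift q a γ) (fun t => q (t + a)) (Iio (1 - a)) :=
  fun _ ht => if_pos ht

lemma qShift_eqOn_Ici : EqOn (qShift q a γ) (fun t => γ⁻¹ * q (t + a - 1)) (Ici (1 - a)) :=
  fun _ ht => if_neg (not_lt.2 ht)

lemma IntervalIntegrable.qShift_left (hq : IntervalIntegrable q volume 0 1) (ha₀ : 0 ≤ a)
    (ha₁ : a ≤ 1) : IntervalIntegrable (qShift q a γ) volume 0 (1 - a) := by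
  have h := (hq.mono_set (uIcc_subset_uIcc_right (mem_uIcc_of_le ha₀ ha₁))).comp_add_right a
  rw [sub_self] at h
  refine h.congr_uIoo fun t ht => ?_
  rw [uIoo_of_le (sub_nonneg.2 ha₁)] at ht
  exact (qShift_eqOn_Iio γ ht.2).symm

lemma IntervalIntegrable.qShift_right (hq : IntervalIntegrable q volume 0 1) (ha₀ : 0 ≤ a)
    (ha₁ : a ≤ 1) : IntervalIntegrable (qShift q a γ) volume (1 - a) 1 := by
  have h := ((hq.mono_set (uIcc_subset_uIcc_left (mem_uIcc_of_le ha₀ ha₁))).comp_add_right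
    (a - 1)).const_mul γ⁻¹
  rw [zero_sub, neg_sub, sub_sub_cancel] at h
  refine h.congr_uIoo fun t ht => ?_
  rw [uIoo_of_le (by linarith)] at ht
  simp only [qShift_eqOn_Ici γ ht.1.le, add_sub_assoc]

lemma IntervalIntegrable.qShift (hq : IntervalIntegrable q volume 0 1) (ha₀ : 0 ≤ a)
    (ha₁ : a ≤ 1) : IntervalIntegrable (qShift q a γ) volume 0 1 :=
  (hq.qShift_left γ ha₀ ha₁).trans (hq.qShift_right γ ha₀ ha₁)

variable {γ}

lemma integral_qShift_smul {E : Type*} [NormedAddCommGroup E] [NormedSpace ℂ E] [CompleteSpace E]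
    (hq : IntervalIntegrable q volume 0 1) (ha₀ : 0 ≤ a) (ha₁ : a ≤ 1)
    {f : ℝ → E} (hf : Continuous f) :
    ∫ t in (0 : ℝ)..1, qShift q a γ t • f t
      = (∫ t in a..1, q t • f (t - a)) + γ⁻¹ • ∫ t in (0 : ℝ)..a, q t • f (t + 1 - a) := by
  rw [← integral_add_adjacent_intervals
    ((hq.qShift_left γ ha₀ ha₁).smul_continuousOn hf.continuousOn)
    ((hq.qShift_right γ ha₀ ha₁).smul_continuousOn hf.continuousOn)]
  congr 1
  · calc ∫ t in (0 : ℝ)..1 - a, qShift q a γ t • f t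
        = ∫ t in (0 : ℝ)..1 - a, q (t + a) • f (t + a - a) :=
          integral_congr_Ioo_of_le (sub_nonneg.2 ha₁) fun t ht => by
            simp only [qShift_eqOn_Iio γ ht.2, add_sub_cancel_right]
      _ = ∫ t in a..1, q t • f (t - a) := by
          simpa using integral_comp_add_right (a := 0) (b := 1 - a) (fun s => q s • f (s - a)) a
  · calc ∫ t in 1 - a..1, qShift q a γ t • f t
        = ∫ t in 1 - a..1, γ⁻¹ • (q (t + (a - 1)) • f (t + (a - 1) + 1 - a)) :=
          integral_congr_Ioo_of_le (by linarith) fun t ht => by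
            simp only [qShift_eqOn_Ici γ ht.1.le, mul_smul, add_sub_assoc]
            ring_nf
      _ = γ⁻¹ • ∫ t in (0 : ℝ)..a, q t • f (t + 1 - a) := by
          rw [intervalIntegral.integral_smul]
          congr 1
          simpa using
            integral_comp_add_right (a := 1 - a) (b := 1) (fun s => q s • f (s + 1 - a)) (a - 1)

end qShift

lemma fundMatrix_qShift_one {q : ℝ → ℂ} (hq : IntervalIntegrable q volume 0 1) (γ : ℂ) {a : ℝ}
    (ha₀ : 0 ≤ a) (ha₁ : a ≤ 1) (ρ : ℂ) :
    fundMatrix (qShift q a γ) 0 ρ 1 = freeFundMatrix ρ 1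
      + vecMulVec (freeFundMatrix ρ a *ᵥ (∫ t in a..1, q t • freeKernel ρ (1 - t))
        + γ⁻¹ • ∫ t in (0 : ℝ)..a, q t • freeKernel ρ (a - t)) ![1, 0] := by
  have hq₁ : IntervalIntegrable q volume a 1 :=
    hq.mono_set (uIcc_subset_uIcc_right (mem_uIcc_of_le ha₀ ha₁))
  have hk (t : ℝ) : q t • freeKernel ρ (1 - (t - a))
      = freeFundMatrix ρ a *ᵥ (q t • freeKernel ρ (1 - t)) := by
    rw [mulVec_smul, freeFundMatrix_mulVec_freeKernel]; congr 2; ring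
  rw [fundMatrix_duhamel (hq.qShift γ ha₀ ha₁), sub_zero,
    integral_qShift_smul (f := fun t => freeKernel ρ (1 - t)) hq ha₀ ha₁
      ((continuous_freeKernel ρ).comp (continuous_sub_left 1)),
    funext hk, ← mulVec_intervalIntegral _ (intervalIntegrable_smul_freeKernel hq₁ ρ 1)]
  congr 5 with t
  ring_nf

lemma charAux_qShift {q : ℝ → ℂ} (hq : IntervalIntegrable q volume 0 1) {γ : ℂ} (hγ : γ ≠ 0)
    {a : ℝ} (ha₀ : 0 ≤ a) (ha₁ : a ≤ 1) (ρ : ℂ) :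
    charAux q a γ ρ = charAux (qShift q a γ) 0 γ ρ := by
  have hR₀ : freeFundMatrix ρ a * freeFundMatrix ρ (-a) = 1 := by
    rw [← freeFundMatrix_add, add_neg_cancel, freeFundMatrix_zero]
  have hR₁ : freeFundMatrix ρ a * freeFundMatrix ρ (1 - a) = freeFundMatrix ρ 1 := by
    rw [← freeFundMatrix_add, add_sub_cancel]
  have key : freeFundMatrix ρ a * (fundMatrix q a ρ 0 - γ • fundMatrix q a ρ 1)
      = 1 - γ • fundMatrix (qShift q a γ) 0 ρ 1 := by
    rw [fundMatrix_zero (hq.mono_set (uIcc_subset_uIcc_left (mem_uIcc_of_le ha₀ ha₁))),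
      fundMatrix_duhamel (hq.mono_set (uIcc_subset_uIcc_right (mem_uIcc_of_le ha₀ ha₁))),
      fundMatrix_qShift_one hq γ ha₀ ha₁]
    simp only [Matrix.mul_sub, Matrix.mul_add, Matrix.mul_smul, mul_vecMulVec, mulVec_mulVec,
      hR₀, hR₁, one_mulVec, add_vecMulVec, smul_vecMulVec, smul_add, smul_smul,
      mul_inv_cancel₀ hγ, one_smul]
    abel
  rw [charAux_eq_det, charAux_eq_det, fundMatrix_self, ← key, det_mul, det_freeFundMatrix, one_mul]

/-- Lemma 4: the spectrum of `L(q, a, γ)` coincides, with multiplicities,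
with the spectrum of `L(q_a, 0, γ)`. -/
theorem spectrum_shift_invariance
    (q : ℝ → ℂ) (hq : MemLp q 2 (volume.restrict (Set.Ioo (0:ℝ) 1)))
    (γ : ℂ) (hγ : γ ≠ 0) (a : ℝ) (ha : a ∈ Set.Ioc (0:ℝ) 1) :
    sameSpectrum (charFun q a γ) (charFun (qShift q a γ) 0 γ) := by
  have hq₁ := hq.intervalIntegrable_of_Ioo one_le_two zero_le_one
  have hΔ : charFun q a γ = charFun (qShift q a γ) 0 γ :=
    funext fun _ => charAux_qShift hq₁ hγ ha.1.le ha.2 _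
  exact hΔ ▸ fun _ _ => Iff.rfl
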